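/- Let S be a finite interval of integers containing {2p−1, 2p, …, 2q+1} for integers p ≤ q, and let Q = Q[p,q] be the Nicolai supercharge on ℋ_S. Then for all integers k, l with p ≤ k < l ≤ q and every f ∈ Ξ̂_{k,l}, the following anticommutators vanish: Q Q(f) + Q(f) Q = 0, Q* Q(f) + Q(f) Q* = 0, Q Q(f)* + Q(f)* Q = 0, and Q* Q(f)* + Q(f)* Q* = 0. -/

import Mathlib

namespace Nicolai

/-- Configurations on the finite interval `S = {a, …, b}` of integers:
`true` = occupied, `false` = empty. -/
abbrev Config (a b : ℤ) : Type := {i : ℤ // i ∈ Finset.Icc a b} → Bool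

/-- The Hilbert space `ℋ_S` with orthonormal basis indexed by configurations. -/
abbrev Hs (a b : ℤ) : Type := EuclideanSpace ℂ (Config a b)

/-- The basis vector `e_g` associated to the configuration `g`. -/
noncomputable def e (a b : ℤ) (g : Config a b) : Hs a b := EuclideanSpace.single g 1

/-- The Jordan–Wigner sign exponent: the number of occupied sites strictly to the left of `i`. -/
noncomputable def signCount (a b : ℤ) (g : Config a b) (i : ℤ) : ℕ :=
  (Finset.univ.filter fun j : {x : ℤ // x ∈ Finset.Icc a b} => j.1 < i ∧ g j = true).card

/-- The annihilation operator `c_i` (zero if `i ∉ S`). -/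
noncomputable def cAnn (a b : ℤ) (i : ℤ) : Module.End ℂ (Hs a b) where
  toFun ψ := WithLp.toLp 2 fun g =>
    if hi : i ∈ Finset.Icc a b then
      if g ⟨i, hi⟩ = false then
        ((-1 : ℂ) ^ signCount a b g i) * ψ (Function.update g ⟨i, hi⟩ true)
      else 0
    else 0
  map_add' ψ φ := by
    rw [WithLp.ext_iff]
    funext g
    simp only [WithLp.ofLp_toLp, PiLp.add_apply]
    split_ifs <;> simp [mul_add]
  map_smul' c ψ := by
    rw [WithLp.ext_iff]
    funext g
    simp only [WithLp.ofLp_toLp, PiLp.smul_apply, smul_eq_mul, RingHom.id_apply]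
    split_ifs <;> ring

/-- The creation operator `c*_i` (zero if `i ∉ S`). -/
noncomputable def cCr (a b : ℤ) (i : ℤ) : Module.End ℂ (Hs a b) where
  toFun ψ := WithLp.toLp 2 fun g =>
    if hi : i ∈ Finset.Icc a b then
      if g ⟨i, hi⟩ = true then
        ((-1 : ℂ) ^ signCount a b g i) * ψ (Function.update g ⟨i, hi⟩ false)
      else 0
    else 0
  map_add' ψ φ := by
    rw [WithLp.ext_iff]
    funext g
    simp only [WithLp.ofLp_toLp, PiLp.add_apply]
    split_ifs <;> simp [mul_add]
  map_smul' c ψ := by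
    rw [WithLp.ext_iff]
    funext g
    simp only [WithLp.ofLp_toLp, PiLp.smul_apply, smul_eq_mul, RingHom.id_apply]
    split_ifs <;> ring

/-- `q_{2i} = c_{2i+1} c*_{2i} c_{2i−1}`. -/
noncomputable def qOp (a b i : ℤ) : Module.End ℂ (Hs a b) :=
  cAnn a b (2 * i + 1) * cCr a b (2 * i) * cAnn a b (2 * i - 1)

/-- The Nicolai supercharge `Q[k,l] = Σ_{i=k}^{l} q_{2i}`. -/
noncomputable def QNic (a b k l : ℤ) : Module.End ℂ (Hs a b) :=
  ∑ i ∈ Finset.Icc k l, qOp a b i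

/-- Membership in `Ξ̂_{k,l}`: a `{−1,+1}`-valued function on `{2k, …, 2l}` with no
forbidden sign triplet at interior even sites, constant on each two-site edge. -/
def memXi (k l : ℤ) (f : ℤ → ℤ) : Prop :=
  (∀ i ∈ Finset.Icc (2 * k) (2 * l), f i = 1 ∨ f i = -1) ∧
  (∀ i : ℤ, k < i → i < l →
    ¬(f (2 * i - 1) = -1 ∧ f (2 * i) = 1 ∧ f (2 * i + 1) = -1) ∧
    ¬(f (2 * i - 1) = 1 ∧ f (2 * i) = -1 ∧ f (2 * i + 1) = 1)) ∧
  f (2 * k) = f (2 * k + 1) ∧ f (2 * l - 1) = f (2 * l)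

/-- `ζ_i(+1) = c*_i`, `ζ_i(−1) = c_i`. -/
noncomputable def zeta (a b i : ℤ) (v : ℤ) : Module.End ℂ (Hs a b) :=
  if v = 1 then cCr a b i else if v = -1 then cAnn a b i else 0

/-- The local fermion operator `Q(f) = ζ_{2k}(f(2k)) ζ_{2k+1}(f(2k+1)) ⋯ ζ_{2l}(f(2l))`,
the product taken in increasing site order. -/
noncomputable def QF (a b k l : ℤ) (f : ℤ → ℤ) : Module.End ℂ (Hs a b) :=
  ((List.range (2 * l - 2 * k + 1).toNat).map
    (fun j => zeta a b (2 * k + (j : ℤ)) (f (2 * k + (j : ℤ))))).prod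

/-- `g` has a forbidden triplet at the even site `2i`. -/
def forbiddenAt (g : ℤ → Bool) (i : ℤ) : Prop :=
  (g (2 * i - 1) = false ∧ g (2 * i) = true ∧ g (2 * i + 1) = false) ∨
  (g (2 * i - 1) = true ∧ g (2 * i) = false ∧ g (2 * i + 1) = true)

/-- Membership in `Υ̂_{k,l}`: no forbidden triplet at interior even sites and the
open SUSY boundary condition (only the values on `{2k, …, 2l}` are relevant). -/
def memUps (k l : ℤ) (g : ℤ → Bool) : Prop :=
  (∀ i : ℤ, k < i → i < l → ¬ forbiddenAt g i) ∧
  g (2 * k) = g (2 * k + 1) ∧ g (2 * l - 1) = g (2 * l)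

/-- Extend a configuration on `S` to all of `ℤ` by `false`. -/
noncomputable def ext (a b : ℤ) (g : Config a b) : ℤ → Bool :=
  fun i => if h : i ∈ Finset.Icc a b then g ⟨i, h⟩ else false

/-- The charge `f ∈ Ξ̂_{k,l}` is applicable to the configuration `g`. -/
def applicable (k l : ℤ) (f : ℤ → ℤ) (g : ℤ → Bool) : Prop :=
  ∀ i : ℤ, 2 * k ≤ i → i ≤ 2 * l → (f i = 1 → g i = false) ∧ (f i = -1 → g i = true)

/-- The configuration `f·g` resulting from the action of the charge `f ∈ Ξ̂_{k,l}` on `g`. -/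
def applyCharge (k l : ℤ) (f : ℤ → ℤ) (g : ℤ → Bool) : ℤ → Bool :=
  fun i => if 2 * k ≤ i ∧ i ≤ 2 * l then decide (f i = 1) else g i

/-- `Reachable p q g₀ g`: `g` is obtained from `g₀` by finitely many applications of
applicable charges from `Ξ̂(p,q) = ⋃_{p ≤ k < l ≤ q} Ξ̂_{k,l}`. -/
inductive Reachable (p q : ℤ) : (ℤ → Bool) → (ℤ → Bool) → Prop
  | refl (g : ℤ → Bool) : Reachable p q g g
  | step {g₀ g : ℤ → Bool} (k l : ℤ) (f : ℤ → ℤ) :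
      Reachable p q g₀ g → p ≤ k → k < l → l ≤ q → memXi k l f → applicable k l f g →
      Reachable p q g₀ (applyCharge k l f g)

/-- The fermion parity operator `P e_g = (−1)^{#occupied sites} e_g`. -/
noncomputable def parity (a b : ℤ) : Module.End ℂ (Hs a b) where
  toFun ψ := WithLp.toLp 2 fun g =>
    ((-1 : ℂ) ^ (Finset.univ.filter fun j : {x : ℤ // x ∈ Finset.Icc a b} => g j = true).card)
      * ψ g
  map_add' ψ φ := by
    rw [WithLp.ext_iff]
    funext g
    simp only [WithLp.ofLp_toLp, PiLp.add_apply]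
    ring
  map_smul' c ψ := by
    rw [WithLp.ext_iff]
    funext g
    simp only [WithLp.ofLp_toLp, PiLp.smul_apply, smul_eq_mul, RingHom.id_apply]
    ring

/-!
Both `q_{2i}` and `Q(f)` are products of an odd number of Jordan–Wigner factors `ζ_t`, and these
square to zero and anticommute at distinct sites. If the sites `2i - 1, 2i, 2i + 1` of `q_{2i}`
avoid `[2k, 2l]`, the two odd products anticommute. Otherwise the defining conditions of `Ξ̂_{k,l}`
(no forbidden triplet inside, constant on the two boundary pairs) force `f` to carry the same factor
as `q_{2i}` at one of these sites `s`; then `q_{2i} Q(f)` and `Q(f) q_{2i}` both contain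
`ζ_s ⋯ ζ_s = ± ζ_s² ⋯ = 0`. The same argument applies to `q_{2i}* = c*_{2i-1} c_{2i} c*_{2i+1}`,
and the identities for `Q(f)*` are the adjoints of those for `Q(f)`.
-/

section AnticommutingProducts

variable {R : Type*} [Ring R] {a : R} {L M : List R}

theorem mul_list_prod_of_forall_anticomm (h : ∀ x ∈ L, a * x = -(x * a)) :
    a * L.prod = (-1) ^ L.length * (L.prod * a) := by
  induction L with
  | nil => simp
  | cons x L ih =>
    rw [List.prod_cons, ← mul_assoc, h x List.mem_cons_self, neg_mul, mul_assoc,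
      ih fun y hy => h y (List.mem_cons_of_mem x hy),
      ((Commute.neg_one_right x).pow_right L.length).left_comm, List.length_cons, pow_succ]
    noncomm_ring

theorem list_prod_mul_list_prod_of_forall_anticomm (h : ∀ x ∈ L, ∀ y ∈ M, x * y = -(y * x)) :
    L.prod * M.prod = (-1) ^ (L.length * M.length) * (M.prod * L.prod) := by
  induction L with
  | nil => simp
  | cons x L ih =>
    rw [List.prod_cons, mul_assoc, ih fun y hy => h y (List.mem_cons_of_mem x hy),
      ((Commute.neg_one_right x).pow_right _).left_comm, ← mul_assoc x,
      mul_list_prod_of_forall_anticomm (h x List.mem_cons_self), List.length_cons, add_one_mul,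
      pow_add]
    noncomm_ring

theorem list_prod_anticomm_of_odd (h : ∀ x ∈ L, ∀ y ∈ M, x * y = -(y * x))
    (hL : Odd L.length) (hM : Odd M.length) :
    L.prod * M.prod + M.prod * L.prod = 0 := by
  rw [list_prod_mul_list_prod_of_forall_anticomm h, (hL.mul hM).neg_one_pow]
  noncomm_ring

theorem mul_list_prod_mul_self_eq_zero (ha : a * a = 0) (h : ∀ x ∈ L, a * x = -(x * a)) :
    a * L.prod * a = 0 := by
  rw [mul_list_prod_of_forall_anticomm h, mul_assoc, mul_assoc, ha, mul_zero, mul_zero]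

theorem list_prod_mul_list_prod_eq_zero (ha : a * a = 0) {L₁ L₂ M₁ M₂ : List R}
    (h : ∀ x ∈ L₂ ++ M₁, a * x = -(x * a)) :
    (L₁ ++ a :: L₂).prod * (M₁ ++ a :: M₂).prod = 0 := by
  have hsandwich := mul_list_prod_mul_self_eq_zero ha h
  simp only [List.prod_append, List.prod_cons] at hsandwich ⊢
  calc _ = L₁.prod * (a * (L₂.prod * M₁.prod) * a) * M₂.prod := by noncomm_ring
    _ = 0 := by rw [hsandwich, mul_zero, zero_mul]

theorem star_anticomm [StarRing R] {b : R} (h : a * b + b * a = 0) :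
    star a * star b + star b * star a = 0 := by
  simpa [add_comm] using congrArg star h

end AnticommutingProducts

section JordanWigner

variable {a b : ℤ}

theorem signCount_update_of_le (g : Config a b) (x : {i : ℤ // i ∈ Finset.Icc a b}) (v : Bool)
    {j : ℤ} (hj : j ≤ x.1) :
    signCount a b (Function.update g x v) j = signCount a b g j := by
  unfold signCount
  congr 1
  refine Finset.filter_congr fun y _ => ?_
  rcases eq_or_ne y x with rfl | hy
  · simp [hj]
  · rw [Function.update_of_ne hy]

theorem signCount_update_true (g : Config a b) {x : {i : ℤ // i ∈ Finset.Icc a b}} {j : ℤ}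
    (hx : x.1 < j) (hgx : g x = false) :
    signCount a b (Function.update g x true) j = signCount a b g j + 1 := by
  have hfilter : (Finset.univ.filter fun y : {i : ℤ // i ∈ Finset.Icc a b} =>
      y.1 < j ∧ Function.update g x true y = true) =
      insert x (Finset.univ.filter fun y => y.1 < j ∧ g y = true) := by
    ext y
    rcases eq_or_ne y x with rfl | hy
    · simp [hx]
    · simp [hy]
  rw [signCount, hfilter, Finset.card_insert_of_notMem (by simp [hgx]), signCount]

theorem neg_one_pow_signCount_update_of_lt (g : Config a b) {x : {i : ℤ // i ∈ Finset.Icc a b}}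
    {v : Bool} {j : ℤ} (hx : x.1 < j) (hv : v ≠ g x) :
    (-1 : ℂ) ^ signCount a b (Function.update g x v) j = -(-1) ^ signCount a b g j := by
  cases v
  · have hg : Function.update (Function.update g x false) x true = g := by
      rw [Function.update_idem, Function.update_eq_self_iff]
      simpa using hv.symm
    conv_rhs => rw [← hg, signCount_update_true _ hx (Function.update_self x false g)]
    ring
  · rw [signCount_update_true g hx (by simpa using hv.symm)]
    ring

theorem zeta_eq_zero {i v : ℤ} (h₁ : v ≠ 1) (h₂ : v ≠ -1) : zeta a b i v = 0 := by
  simp [zeta, h₁, h₂]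

theorem zeta_one (i : ℤ) : zeta a b i 1 = cCr a b i := if_pos rfl

theorem zeta_neg_one (i : ℤ) : zeta a b i (-1) = cAnn a b i := by
  simp [zeta]

theorem zeta_apply {v : ℤ} (hv : v = 1 ∨ v = -1) (i : ℤ) (ψ : Hs a b) (g : Config a b) :
    zeta a b i v ψ g =
      if hi : i ∈ Finset.Icc a b then
        if g ⟨i, hi⟩ = decide (v = 1) then
          (-1 : ℂ) ^ signCount a b g i * ψ (Function.update g ⟨i, hi⟩ !decide (v = 1))
        else 0
      else 0 := by
  rcases hv with rfl | rfl
  · rw [zeta_one]; rfl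
  · rw [zeta_neg_one, show decide ((-1 : ℤ) = 1) = false by decide]; rfl

theorem zeta_mul_self (i v : ℤ) : zeta a b i v * zeta a b i v = 0 := by
  by_cases hv : v = 1 ∨ v = -1
  · ext ψ g
    by_cases hi : i ∈ Finset.Icc a b <;> simp [zeta_apply hv, hi]
  · push Not at hv
    rw [zeta_eq_zero hv.1 hv.2, zero_mul]

theorem zeta_anticomm {i j : ℤ} (hij : i ≠ j) (v w : ℤ) :
    zeta a b i v * zeta a b j w = -(zeta a b j w * zeta a b i v) := by
  by_cases hv : v = 1 ∨ v = -1
  swap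
  · push Not at hv
    simp [zeta_eq_zero hv.1 hv.2]
  by_cases hw : w = 1 ∨ w = -1
  swap
  · push Not at hw
    simp [zeta_eq_zero hw.1 hw.2]
  ext ψ g
  simp only [Module.End.mul_apply, LinearMap.neg_apply, PiLp.neg_apply, zeta_apply hv,
    zeta_apply hw]
  by_cases hi : i ∈ Finset.Icc a b
  swap
  · simp [hi]
  by_cases hj : j ∈ Finset.Icc a b
  swap
  · simp [hj]
  simp only [dif_pos hi, dif_pos hj]
  set x : {t : ℤ // t ∈ Finset.Icc a b} := ⟨i, hi⟩
  set y : {t : ℤ // t ∈ Finset.Icc a b} := ⟨j, hj⟩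
  have hxy : x ≠ y := fun h => hij (congrArg Subtype.val h)
  simp only [Function.update_of_ne hxy, Function.update_of_ne hxy.symm]
  by_cases hgx : g x = decide (v = 1)
  swap
  · simp [hgx]
  by_cases hgy : g y = decide (w = 1)
  swap
  · simp [hgy]
  have hvx : (!decide (v = 1)) ≠ g x := by simp [hgx]
  have hwy : (!decide (w = 1)) ≠ g y := by simp [hgy]
  simp only [if_pos hgx, if_pos hgy, Function.update_comm hxy]
  rcases lt_or_gt_of_ne hij with hlt | hlt
  · rw [neg_one_pow_signCount_update_of_lt g (v := !decide (v = 1)) (x := x) hlt hvx,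
      signCount_update_of_le g y _ hlt.le]
    ring
  · rw [neg_one_pow_signCount_update_of_lt g (v := !decide (w = 1)) (x := y) hlt hwy,
      signCount_update_of_le g x _ hlt.le]
    ring

theorem adjoint_zeta (i v : ℤ) : LinearMap.adjoint (zeta a b i v) = zeta a b i (-v) := by
  by_cases hv : v = 1 ∨ v = -1
  swap
  · push Not at hv
    rw [zeta_eq_zero hv.1 hv.2, zeta_eq_zero (by omega) (by omega), map_zero]
  have hv' : -v = 1 ∨ -v = -1 := by omega
  have hdec : decide (-v = 1) = !decide (v = 1) := by rcases hv with rfl | rfl <;> decide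
  symm
  rw [LinearMap.eq_adjoint_iff]
  intro x y
  by_cases hi : i ∈ Finset.Icc a b
  swap
  · have hzero : ∀ u, (u = 1 ∨ u = -1) → ∀ ψ, zeta a b i u ψ = 0 := fun u hu ψ => by
      ext g
      simp [zeta_apply hu, hi]
    rw [hzero _ hv', hzero _ hv, inner_zero_left, inner_zero_right]
  have hflip : Function.Involutive
      fun g : Config a b => Function.update g ⟨i, hi⟩ (!g ⟨i, hi⟩) := by
    intro g
    simp
  rw [PiLp.inner_apply, PiLp.inner_apply]
  refine Fintype.sum_bijective _ hflip.bijective _ _ fun g => ?_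
  simp only [RCLike.inner_apply, zeta_apply hv, zeta_apply hv', dif_pos hi, hdec]
  set s : {t : ℤ // t ∈ Finset.Icc a b} := ⟨i, hi⟩
  have hsign : ∀ β, signCount a b (Function.update g s β) i = signCount a b g i :=
    fun β => signCount_update_of_le g s β le_rfl
  have hself : Function.update g s (g s) = g := Function.update_eq_self s g
  cases hd : decide (v = 1) <;> cases hg : g s <;> rw [hg] at hself <;>
    simp [hsign, hself] <;> ring

end JordanWigner

noncomputable def zetaProd (a b : ℤ) (L : List ℤ) (g : ℤ → ℤ) : Module.End ℂ (Hs a b) :=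
  (L.map fun t => zeta a b t (g t)).prod

section ZetaProducts

variable {a b : ℤ}

theorem zeta_anticomm_of_notMem {s : ℤ} {L : List ℤ} (hs : s ∉ L) (v : ℤ) (g : ℤ → ℤ) :
    ∀ x ∈ L.map (fun t => zeta a b t (g t)), zeta a b s v * x = -(x * zeta a b s v) := by
  intro x hx
  obtain ⟨t, ht, rfl⟩ := List.mem_map.1 hx
  exact zeta_anticomm (fun h : s = t => hs (h ▸ ht)) v (g t)

theorem zetaProd_anticomm_of_disjoint {L M : List ℤ} (hLM : L.Disjoint M) (hL : Odd L.length)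
    (hM : Odd M.length) (g h : ℤ → ℤ) :
    zetaProd a b L g * zetaProd a b M h + zetaProd a b M h * zetaProd a b L g = 0 := by
  refine list_prod_anticomm_of_odd ?_ (by simpa using hL) (by simpa using hM)
  intro x hx
  obtain ⟨t, ht, rfl⟩ := List.mem_map.1 hx
  exact zeta_anticomm_of_notMem (fun htM => hLM ht htM) (g t) h

theorem zetaProd_mul_zetaProd_eq_zero {L M : List ℤ} (hL : L.Nodup) (hM : M.Nodup) {s : ℤ}
    (hsL : s ∈ L) (hsM : s ∈ M) {g h : ℤ → ℤ} (hgh : g s = h s) :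
    zetaProd a b L g * zetaProd a b M h = 0 := by
  obtain ⟨L₁, L₂, rfl⟩ := List.append_of_mem hsL
  obtain ⟨M₁, M₂, rfl⟩ := List.append_of_mem hsM
  have hL₂ : s ∉ L₂ := fun hs => (List.nodup_cons.1 (List.nodup_middle.1 hL)).1 (by simp [hs])
  have hM₁ : s ∉ M₁ := fun hs => (List.nodup_cons.1 (List.nodup_middle.1 hM)).1 (by simp [hs])
  simp only [zetaProd, List.map_append, List.map_cons, hgh]
  refine list_prod_mul_list_prod_eq_zero (zeta_mul_self s (h s)) fun x hx => ?_
  rcases List.mem_append.1 hx with hx | hx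
  · exact zeta_anticomm_of_notMem hL₂ _ g x hx
  · exact zeta_anticomm_of_notMem hM₁ _ h x hx

theorem zetaProd_anticomm_of_mem {L M : List ℤ} (hL : L.Nodup) (hM : M.Nodup) {s : ℤ}
    (hsL : s ∈ L) (hsM : s ∈ M) {g h : ℤ → ℤ} (hgh : g s = h s) :
    zetaProd a b L g * zetaProd a b M h + zetaProd a b M h * zetaProd a b L g = 0 := by
  rw [zetaProd_mul_zetaProd_eq_zero hL hM hsL hsM hgh,
    zetaProd_mul_zetaProd_eq_zero hM hL hsM hsL hgh.symm, add_zero]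

theorem adjoint_zetaProd (L : List ℤ) (g : ℤ → ℤ) :
    LinearMap.adjoint (zetaProd a b L g) = zetaProd a b L.reverse (fun t => -g t) := by
  induction L with
  | nil => exact LinearMap.adjoint_id
  | cons t L ih =>
    rw [← LinearMap.star_eq_adjoint] at ih ⊢
    simp only [zetaProd, List.map_cons, List.prod_cons, List.reverse_cons, List.map_append,
      List.prod_append, star_mul, List.map_nil, List.prod_nil, mul_one] at ih ⊢
    rw [ih, LinearMap.star_eq_adjoint, adjoint_zeta]

end ZetaProducts

def chargeSites (k l : ℤ) : List ℤ :=
  (List.range (2 * l - 2 * k + 1).toNat).map fun j : ℕ => 2 * k + (j : ℤ)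

theorem mem_chargeSites {k l t : ℤ} : t ∈ chargeSites k l ↔ 2 * k ≤ t ∧ t ≤ 2 * l := by
  simp only [chargeSites, List.mem_map, List.mem_range]
  constructor
  · rintro ⟨j, hj, rfl⟩
    omega
  · rintro ⟨h₁, h₂⟩
    exact ⟨(t - 2 * k).toNat, by omega, by omega⟩

theorem nodup_chargeSites (k l : ℤ) : (chargeSites k l).Nodup :=
  (List.nodup_range).map fun i j h => by simpa using h

theorem odd_length_chargeSites {k l : ℤ} (hkl : k ≤ l) : Odd (chargeSites k l).length := by
  rw [chargeSites, List.length_map, List.length_range]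
  exact ⟨(l - k).toNat, by omega⟩

theorem QF_eq_zetaProd (a b k l : ℤ) (f : ℤ → ℤ) :
    QF a b k l f = zetaProd a b (chargeSites k l) f := by
  simp only [QF, zetaProd, chargeSites, List.map_map, List.bind_eq_flatMap, List.pure_def,
    ← List.map_eq_flatMap]
  rfl

def qSign (i t : ℤ) : ℤ := if t = 2 * i then 1 else -1

theorem qOp_eq_zetaProd (a b i : ℤ) :
    qOp a b i = zetaProd a b [2 * i + 1, 2 * i, 2 * i - 1] (qSign i) := by
  simp [qOp, zetaProd, qSign, zeta_one, zeta_neg_one, mul_assoc]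

theorem nodup_triplet (i : ℤ) : [2 * i + 1, 2 * i, 2 * i - 1].Nodup := by
  simp only [List.nodup_cons, List.mem_cons, List.not_mem_nil, or_false, List.nodup_nil,
    not_false_eq_true, and_true]
  omega

theorem triplet_disjoint_or_matches {k l : ℤ} {f : ℤ → ℤ} (hkl : k < l) (hf : memXi k l f)
    {c : ℤ} (hc : c = 1 ∨ c = -1) (i : ℤ) :
    (∀ t ∈ [2 * i + 1, 2 * i, 2 * i - 1], t < 2 * k ∨ 2 * l < t) ∨
      ∃ s ∈ [2 * i + 1, 2 * i, 2 * i - 1], 2 * k ≤ s ∧ s ≤ 2 * l ∧ c * qSign i s = f s := by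
  obtain ⟨hval, hforb, hk, hl⟩ := hf
  simp only [List.mem_cons, List.not_mem_nil, or_false, forall_eq_or_imp, forall_eq,
    exists_eq_or_imp, exists_eq_left, qSign, if_true,
    if_neg (show 2 * i + 1 ≠ 2 * i by omega), if_neg (show 2 * i - 1 ≠ 2 * i by omega)]
  by_cases hout : i < k ∨ l < i
  · left
    omega
  right
  have hv : ∀ t, 2 * k ≤ t → t ≤ 2 * l → f t = 1 ∨ f t = -1 :=
    fun t h₁ h₂ => hval t (Finset.mem_Icc.2 ⟨h₁, h₂⟩)
  rcases (show i = k ∨ i = l ∨ (k < i ∧ i < l) by omega) with rfl | rfl | ⟨hki, hil⟩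
  · have hmid := hv (2 * i) le_rfl (by omega)
    omega
  · have hmid := hv (2 * i) (by omega) le_rfl
    omega
  · have hnot := hforb i hki hil
    have hleft := hv (2 * i - 1) (by omega) (by omega)
    have hmid := hv (2 * i) (by omega) (by omega)
    have hright := hv (2 * i + 1) (by omega) (by omega)
    omega

theorem zetaProd_anticomm_QF {a b k l : ℤ} (hkl : k ≤ l) (f : ℤ → ℤ) {L : List ℤ}
    (hL : L.Nodup) (hodd : Odd L.length) {g : ℤ → ℤ}
    (h : (∀ t ∈ L, t < 2 * k ∨ 2 * l < t) ∨ ∃ s ∈ L, 2 * k ≤ s ∧ s ≤ 2 * l ∧ g s = f s) :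
    zetaProd a b L g * QF a b k l f + QF a b k l f * zetaProd a b L g = 0 := by
  rw [QF_eq_zetaProd]
  rcases h with hout | ⟨s, hs, hks, hsl, hgs⟩
  · refine zetaProd_anticomm_of_disjoint (fun t htL htC => ?_) hodd
      (odd_length_chargeSites hkl) g f
    have hin := mem_chargeSites.1 htC
    have hnotin := hout t htL
    omega
  · exact zetaProd_anticomm_of_mem hL (nodup_chargeSites k l) hs
      (mem_chargeSites.2 ⟨hks, hsl⟩) hgs

theorem qOp_anticomm_QF {a b k l : ℤ} (hkl : k < l) {f : ℤ → ℤ} (hf : memXi k l f) (i : ℤ) :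
    qOp a b i * QF a b k l f + QF a b k l f * qOp a b i = 0 := by
  rw [qOp_eq_zetaProd]
  refine zetaProd_anticomm_QF hkl.le f (nodup_triplet i) ⟨1, rfl⟩ ?_
  simpa only [one_mul] using triplet_disjoint_or_matches hkl hf (Or.inl rfl) i

theorem adjoint_qOp_anticomm_QF {a b k l : ℤ} (hkl : k < l) {f : ℤ → ℤ} (hf : memXi k l f)
    (i : ℤ) :
    LinearMap.adjoint (qOp a b i) * QF a b k l f + QF a b k l f * LinearMap.adjoint (qOp a b i)
      = 0 := by
  rw [qOp_eq_zetaProd, adjoint_zetaProd]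
  refine zetaProd_anticomm_QF hkl.le f (List.nodup_reverse.2 (nodup_triplet i)) ⟨1, rfl⟩ ?_
  simpa only [List.mem_reverse, neg_one_mul] using
    triplet_disjoint_or_matches hkl hf (Or.inr rfl) i

theorem adjoint_QNic (a b p q : ℤ) :
    LinearMap.adjoint (QNic a b p q) = ∑ i ∈ Finset.Icc p q, LinearMap.adjoint (qOp a b i) :=
  map_sum _ _ _

theorem nicolai_supercharge_anticommutes_local_charges_general (a b p q : ℤ) (k l : ℤ) (hkl : k < l)
    (f : ℤ → ℤ) (hf : memXi k l f) :
    QNic a b p q * QF a b k l f + QF a b k l f * QNic a b p q = 0 ∧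
    LinearMap.adjoint (QNic a b p q) * QF a b k l f
      + QF a b k l f * LinearMap.adjoint (QNic a b p q) = 0 ∧
    QNic a b p q * LinearMap.adjoint (QF a b k l f)
      + LinearMap.adjoint (QF a b k l f) * QNic a b p q = 0 ∧
    LinearMap.adjoint (QNic a b p q) * LinearMap.adjoint (QF a b k l f)
      + LinearMap.adjoint (QF a b k l f) * LinearMap.adjoint (QNic a b p q) = 0 := by
  have hQ : QNic a b p q * QF a b k l f + QF a b k l f * QNic a b p q = 0 := by
    simp only [QNic, Finset.sum_mul, Finset.mul_sum, ← Finset.sum_add_distrib,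
      qOp_anticomm_QF hkl hf, Finset.sum_const_zero]
  have hQadj : LinearMap.adjoint (QNic a b p q) * QF a b k l f
      + QF a b k l f * LinearMap.adjoint (QNic a b p q) = 0 := by
    simp only [adjoint_QNic, Finset.sum_mul, Finset.mul_sum, ← Finset.sum_add_distrib,
      adjoint_qOp_anticomm_QF hkl hf, Finset.sum_const_zero]
  refine ⟨hQ, hQadj, ?_, ?_⟩
  · simpa only [LinearMap.star_eq_adjoint, LinearMap.adjoint_adjoint] using star_anticomm hQadj
  · simpa only [LinearMap.star_eq_adjoint] using star_anticomm hQ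

/-- the Nicolai supercharge and its adjoint anticommute with every local
fermion operator `Q(f)` and with its adjoint. -/
theorem nicolai_supercharge_anticommutes_local_charges (a b p q : ℤ) (hpq : p ≤ q)
    (hS : Finset.Icc (2 * p - 1) (2 * q + 1) ⊆ Finset.Icc a b)
    (k l : ℤ) (hpk : p ≤ k) (hkl : k < l) (hlq : l ≤ q)
    (f : ℤ → ℤ) (hf : memXi k l f) :
    QNic a b p q * QF a b k l f + QF a b k l f * QNic a b p q = 0 ∧
    LinearMap.adjoint (QNic a b p q) * QF a b k l f
      + QF a b k l f * LinearMap.adjoint (QNic a b p q) = 0 ∧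
    QNic a b p q * LinearMap.adjoint (QF a b k l f)
      + LinearMap.adjoint (QF a b k l f) * QNic a b p q = 0 ∧
    LinearMap.adjoint (QNic a b p q) * LinearMap.adjoint (QF a b k l f)
      + LinearMap.adjoint (QF a b k l f) * LinearMap.adjoint (QNic a b p q) = 0 :=
  nicolai_supercharge_anticommutes_local_charges_general a b p q k l hkl f hf

end Nicolai
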